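/- Let f : ℝ → ℝ be a smooth function that is periodic with period L > 0, and write f̄ = (1/L)∫₀^L f(x) dx for its mean and f^{(j)} for its j-th derivative. Then for all m, N ∈ ℕ with 1 ≤ m < N, ∫₀^L (f^{(m)}(x))² dx ≤ (∫₀^L (f(x) − f̄)² dx)^{1 − m/N} · (∫₀^L (f^{(N)}(x))² dx)^{m/N}. -/

import Mathlib

open MeasureTheory intervalIntegral

lemma my_periodic_deriv {f : ℝ → ℝ} {L : ℝ} (h : Function.Periodic f L) :
    Function.Periodic (deriv f) L := by
  intro x
  have hfun : (fun y => f (y + L)) = f := funext h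
  rw [← deriv_comp_add_const f L x, hfun]

lemma my_periodic_iteratedDeriv {f : ℝ → ℝ} {L : ℝ} (h : Function.Periodic f L) (k : ℕ) :
    Function.Periodic (iteratedDeriv k f) L := by
  induction k with
  | zero => simpa [iteratedDeriv_zero] using h
  | succ n ih => rw [iteratedDeriv_succ]; exact my_periodic_deriv ih

lemma my_cs (g h : ℝ → ℝ) (L : ℝ) (hL : 0 ≤ L) (hg : Continuous g) (hh : Continuous h) :
    (∫ x in (0:ℝ)..L, g x * h x) ^ 2 ≤
      (∫ x in (0:ℝ)..L, g x ^ 2) * (∫ x in (0:ℝ)..L, h x ^ 2) := by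
  set A := ∫ x in (0:ℝ)..L, g x ^ 2 with hA
  set B := ∫ x in (0:ℝ)..L, h x ^ 2 with hB
  set C := ∫ x in (0:ℝ)..L, g x * h x with hC
  have key : ∀ t : ℝ, 0 ≤ A * (t * t) + (2 * C) * t + B := by
    intro t
    have h0 : 0 ≤ ∫ x in (0:ℝ)..L, (t * g x + h x) ^ 2 :=
      intervalIntegral.integral_nonneg hL (fun x _ => sq_nonneg _)
    have heq : (∫ x in (0:ℝ)..L, (t * g x + h x) ^ 2)
        = A * (t * t) + (2 * C) * t + B := by
      have hexp : ∀ x : ℝ, (t * g x + h x) ^ 2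
          = t ^ 2 * g x ^ 2 + (2 * t) * (g x * h x) + h x ^ 2 := by intro x; ring
      simp_rw [hexp]
      rw [intervalIntegral.integral_add, intervalIntegral.integral_add,
        intervalIntegral.integral_const_mul, intervalIntegral.integral_const_mul]
      · ring
      · exact Continuous.intervalIntegrable (by fun_prop) 0 L
      · exact Continuous.intervalIntegrable (by fun_prop) 0 L
      · exact Continuous.intervalIntegrable (by fun_prop) 0 L
      · exact Continuous.intervalIntegrable (by fun_prop) 0 L
    linarith [heq ▸ h0]
  have hd := discrim_le_zero key
  rw [discrim] at hd
  nlinarith [hd]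

lemma my_key_step (g : ℝ → ℝ) (L : ℝ) (hL : 0 < L) (hg : ContDiff ℝ (⊤ : ℕ∞) g)
    (hper : Function.Periodic g L) (k : ℕ) :
    (∫ x in (0:ℝ)..L, (iteratedDeriv (k+1) g x) ^ 2) ^ 2 ≤
      (∫ x in (0:ℝ)..L, (iteratedDeriv k g x) ^ 2) *
      (∫ x in (0:ℝ)..L, (iteratedDeriv (k+2) g x) ^ 2) := by
  have contF : ∀ j : ℕ, Continuous (iteratedDeriv j g) := fun j =>
    hg.continuous_iteratedDeriv j (by exact_mod_cast le_top)
  have hasD : ∀ (j : ℕ) (x : ℝ), HasDerivAt (iteratedDeriv j g) (iteratedDeriv (j+1) g x) x := by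
    intro j x
    rw [iteratedDeriv_succ]
    exact ((hg.differentiable_iteratedDeriv j
      (by exact_mod_cast lt_top_iff_ne_top.2 (by simp))) x).hasDerivAt
  have hbd : ∀ j : ℕ, iteratedDeriv j g L = iteratedDeriv j g 0 := by
    intro j
    have := my_periodic_iteratedDeriv hper j 0
    simpa using this
  have ibp : (∫ x in (0:ℝ)..L,
      (iteratedDeriv (k+1) g x * iteratedDeriv (k+1) g x
        + iteratedDeriv k g x * iteratedDeriv (k+2) g x)) = 0 := by
    rw [integral_deriv_mul_eq_sub_of_hasDerivAt
      ((contF k).continuousOn) ((contF (k+1)).continuousOn)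
      (fun x _ => hasD k x) (fun x _ => hasD (k+1) x)
      (Continuous.intervalIntegrable (contF (k+1)) 0 L) (Continuous.intervalIntegrable (contF (k+2)) 0 L)]
    rw [hbd k, hbd (k+1)]
    ring
  have hsplit : (∫ x in (0:ℝ)..L, (iteratedDeriv (k+1) g x) ^ 2)
      = - ∫ x in (0:ℝ)..L, iteratedDeriv k g x * iteratedDeriv (k+2) g x := by
    rw [intervalIntegral.integral_add
      (Continuous.intervalIntegrable (show Continuous (fun x => iteratedDeriv (k+1) g x * iteratedDeriv (k+1) g x) from (contF (k+1)).mul (contF (k+1))) 0 L)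
      (Continuous.intervalIntegrable (show Continuous (fun x => iteratedDeriv k g x * iteratedDeriv (k+2) g x) from (contF k).mul (contF (k+2))) 0 L)] at ibp
    have hsq : (∫ x in (0:ℝ)..L, (iteratedDeriv (k+1) g x) ^ 2)
        = ∫ x in (0:ℝ)..L, iteratedDeriv (k+1) g x * iteratedDeriv (k+1) g x := by
      simp_rw [sq]
    linarith
  rw [hsplit]
  rw [neg_pow]
  simpa using my_cs (iteratedDeriv k g) (iteratedDeriv (k+2) g) L hL.le (contF k) (contF (k+2))

lemma my_discrete_interp (a : ℕ → ℝ) (h0 : ∀ k, 0 ≤ a k)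
    (hch : ∀ k, (a (k+1)) ^ 2 ≤ a k * a (k+2))
    (m N : ℕ) (hm : 1 ≤ m) (hmN : m < N) :
    a m ≤ (a 0) ^ (1 - (m:ℝ)/(N:ℝ)) * (a N) ^ ((m:ℝ)/(N:ℝ)) := by
  rcases eq_or_lt_of_le (h0 m) with hz | hpos
  · rw [← hz]
    exact mul_nonneg (Real.rpow_nonneg (h0 0) _) (Real.rpow_nonneg (h0 N) _)
  -- positivity of everything
  have down : ∀ j, 0 < a (j+1) → 0 < a j := by
    intro j hj
    rcases (h0 j).lt_or_eq with h | h
    · exact h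
    · exfalso; have := hch j; rw [← h, zero_mul] at this; nlinarith
  have down_all : ∀ n, ∀ i ≤ n, 0 < a n → 0 < a i := by
    intro n
    induction n with
    | zero => intro i hi h; simpa [Nat.le_zero.mp hi] using h
    | succ n ih =>
      intro i hi h
      rcases Nat.lt_succ_iff_lt_or_eq.mp (Nat.lt_succ_of_le hi) with h' | h'
      · exact ih i (by omega) (down n h)
      · rwa [h']
  have up : ∀ j, 1 ≤ j → 0 < a j → 0 < a (j+1) := by
    intro j hj hpos
    obtain ⟨i, rfl⟩ : ∃ i, j = i + 1 := ⟨j - 1, by omega⟩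
    rcases (h0 (i+2)).lt_or_eq with h | h
    · exact h
    · exfalso; have := hch i; rw [← h, mul_zero] at this; nlinarith
  have up_all : ∀ d, 0 < a (m + d) := by
    intro d
    induction d with
    | zero => simpa using hpos
    | succ d ih => exact up (m + d) (by omega) ih
  have hpa : ∀ k, 0 < a k := by
    intro k
    rcases le_or_gt k m with h | h
    · exact down_all m k h hpos
    · have := up_all (k - m); rwa [Nat.add_sub_cancel' h.le] at this
  -- logs
  set b : ℕ → ℝ := fun k => Real.log (a k) with hb
  have hconv : ∀ k, 2 * b (k+1) ≤ b k + b (k+2) := by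
    intro k
    have hlog := Real.log_le_log (pow_pos (hpa (k+1)) 2) (hch k)
    rw [Real.log_pow, Real.log_mul (hpa k).ne' (hpa (k+2)).ne'] at hlog
    simpa [hb] using hlog
  set d : ℕ → ℝ := fun k => b (k+1) - b k with hd
  have dmono : Monotone d := monotone_nat_of_le_succ (fun k => by
    have := hconv k; simp only [hd]; linarith)
  have sum1 : ∑ k ∈ Finset.range m, d k = b m - b 0 := Finset.sum_range_sub (fun i => b i) m
  have sum2 : ∑ k ∈ Finset.Ico m N, d k = b N - b m := by
    rw [Finset.sum_Ico_eq_sub _ hmN.le, Finset.sum_range_sub (fun i => b i),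
      Finset.sum_range_sub (fun i => b i)]
    ring
  have bound1 : b m - b 0 ≤ (m : ℝ) * d (m-1) := by
    rw [← sum1]
    calc ∑ k ∈ Finset.range m, d k ≤ (Finset.range m).card • d (m-1) :=
          Finset.sum_le_card_nsmul _ _ _ (fun k hk =>
            dmono (by simp at hk; omega))
      _ = (m : ℝ) * d (m-1) := by rw [Finset.card_range, nsmul_eq_mul]
  have bound2 : ((N - m : ℕ) : ℝ) * d (m-1) ≤ b N - b m := by
    rw [← sum2]
    calc ((N - m : ℕ) : ℝ) * d (m-1) = (Finset.Ico m N).card • d (m-1) := by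
          rw [Nat.card_Ico, nsmul_eq_mul]
      _ ≤ ∑ k ∈ Finset.Ico m N, d k :=
          Finset.card_nsmul_le_sum _ _ _ (fun k hk =>
            dmono (by simp at hk; omega))
  have hNm : ((N - m : ℕ) : ℝ) = (N : ℝ) - (m : ℝ) := by
    rw [Nat.cast_sub hmN.le]
  rw [hNm] at bound2
  have hNpos : (0:ℝ) < N := by exact_mod_cast (Nat.pos_of_ne_zero (by omega))
  have hmpos : (0:ℝ) < m := by exact_mod_cast hm
  have hNmpos : (0:ℝ) < (N:ℝ) - (m:ℝ) := by
    have : (m:ℝ) < N := by exact_mod_cast hmN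
    linarith
  have bfinal : b m ≤ (1 - (m:ℝ)/(N:ℝ)) * b 0 + ((m:ℝ)/(N:ℝ)) * b N := by
    have key : (N:ℝ) * b m ≤ ((N:ℝ) - m) * b 0 + (m:ℝ) * b N := by
      nlinarith [mul_le_mul_of_nonneg_left bound1 hNmpos.le,
        mul_le_mul_of_nonneg_left bound2 hmpos.le]
    have expand : (1 - (m:ℝ)/(N:ℝ)) * b 0 + ((m:ℝ)/(N:ℝ)) * b N
        = (((N:ℝ) - m) * b 0 + (m:ℝ) * b N) / N := by
      field_simp
    rw [expand, le_div_iff₀ hNpos]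
    nlinarith [mul_le_mul_of_nonneg_left bound1 hNmpos.le,
      mul_le_mul_of_nonneg_left bound2 hmpos.le]
  calc a m = Real.exp (b m) := (Real.exp_log (hpa m)).symm
    _ ≤ Real.exp ((1 - (m:ℝ)/(N:ℝ)) * b 0 + ((m:ℝ)/(N:ℝ)) * b N) := Real.exp_le_exp.mpr bfinal
    _ = (a 0) ^ (1 - (m:ℝ)/(N:ℝ)) * (a N) ^ ((m:ℝ)/(N:ℝ)) := by
        rw [Real.exp_add, Real.rpow_def_of_pos (hpa 0), Real.rpow_def_of_pos (hpa N)]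
        simp only [hb]
        ring_nf


/-- **Iterated interpolation inequality** (final appendix lemma of the paper).
For a smooth `L`-periodic function `f` with mean `f̄` and `1 ≤ m < N`:
`∫₀^L (f^{(m)})² ≤ (∫₀^L (f − f̄)²)^{1−m/N} (∫₀^L (f^{(N)})²)^{m/N}`. -/
theorem iterated_interpolation
    (f : ℝ → ℝ) (L : ℝ) (hL : 0 < L)
    (hf : ContDiff ℝ (⊤ : ℕ∞) f) (hper : Function.Periodic f L)
    (m N : ℕ) (hm : 1 ≤ m) (hmN : m < N) :
    (∫ x in (0:ℝ)..L, (iteratedDeriv m f x) ^ 2) ≤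
      (∫ x in (0:ℝ)..L, (f x - (1 / L) * ∫ y in (0:ℝ)..L, f y) ^ 2) ^
          (1 - (m : ℝ) / (N : ℝ)) *
        (∫ x in (0:ℝ)..L, (iteratedDeriv N f x) ^ 2) ^ ((m : ℝ) / (N : ℝ)) := by
  set c : ℝ := (1 / L) * ∫ y in (0:ℝ)..L, f y with hc
  set g : ℝ → ℝ := fun x => f x - c with hgdef
  have hg : ContDiff ℝ (⊤ : ℕ∞) g := hf.sub contDiff_const
  have hgper : Function.Periodic g L := fun x => by simp [hgdef, hper x]
  have hderiv_eq : ∀ j : ℕ, 1 ≤ j → iteratedDeriv j g = iteratedDeriv j f := by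
    intro j hj
    obtain ⟨n, rfl⟩ : ∃ n, j = n + 1 := ⟨j - 1, by omega⟩
    have hdg : deriv g = deriv f := funext fun x => by
      simp only [hgdef]
      exact deriv_sub_const (f := f) (x := x) c
    rw [iteratedDeriv_succ', iteratedDeriv_succ', hdg]
  set a : ℕ → ℝ := fun j => ∫ x in (0:ℝ)..L, (iteratedDeriv j g x) ^ 2 with ha
  have contF : ∀ j : ℕ, Continuous (iteratedDeriv j g) := fun j =>
    hg.continuous_iteratedDeriv j (by exact_mod_cast le_top)
  have h0 : ∀ k, 0 ≤ a k := fun k =>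
    intervalIntegral.integral_nonneg hL.le (fun x _ => sq_nonneg _)
  have hch : ∀ k, (a (k+1)) ^ 2 ≤ a k * a (k+2) := fun k =>
    my_key_step g L hL hg hgper k
  have hmain := my_discrete_interp a h0 hch m N hm hmN
  have e0 : a 0 = ∫ x in (0:ℝ)..L, (f x - c) ^ 2 := by
    simp [ha, iteratedDeriv_zero, hgdef]
  have em : a m = ∫ x in (0:ℝ)..L, (iteratedDeriv m f x) ^ 2 := by
    rw [ha]; simp only [hderiv_eq m hm]
  have eN : a N = ∫ x in (0:ℝ)..L, (iteratedDeriv N f x) ^ 2 := by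
    rw [ha]; simp only [hderiv_eq N (by omega)]
  rw [e0, em, eN] at hmain
  exact hmain
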